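/- (Key step in the proof of Lemma 2: smoothness of the flattening map h^⊥.) Let M be a smooth manifold, let Φ : ℝ × M → M be a smooth map (for example, the flow of a smooth vector field), and let h : M → ℝ be a smooth function such that for every x ∈ M and every t ∈ ℝ the derivative of the real function s ↦ h(Φ(s, x)) at s = t is strictly positive. Suppose τ : M → ℝ is a function satisfying h(Φ(τ(x), x)) = 0 for all x ∈ M (so τ(x) is the unique time at which the curve s ↦ Φ(s, x) crosses the level set h = 0). Then τ is a smooth function on M. -/

import Mathlib

/-!
Read in the chart `ψ` at `x₀`, the crossing time solves the scalar equation
`h (Φ (t, ψ.symm y)) = 0`, whose `t`-derivative is nonzero, so the implicit function theorem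
gives a smooth local solution `σ`. Since `s ↦ h (Φ (s, x))` is strictly increasing it vanishes
at most once, hence `τ = σ` near `x₀`.
-/

open scoped Manifold Topology
open Filter

theorem ContinuousLinearMap.isInvertible_of_isUnit_apply_one {R : Type*} [Semiring R]
    [TopologicalSpace R] [ContinuousMul R] {f : R →L[R] R} (hf : IsUnit (f 1)) :
    f.IsInvertible :=
  ⟨ContinuousLinearEquiv.unitsEquivAut R hf.unit, ContinuousLinearMap.ext_ring (by simp)⟩

section ScalarImplicitFunction

variable {𝕜 : Type*} [RCLike 𝕜] {E : Type*} [NormedAddCommGroup E] [NormedSpace 𝕜 E]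
  [CompleteSpace E]

theorem ContDiffAt.exists_contDiffAt_eventually_apply_eq_of_deriv_ne_zero {f : E × 𝕜 → 𝕜}
    {y₀ : E} {t₀ : 𝕜} {n : WithTop ℕ∞} (hf : ContDiffAt 𝕜 n f (y₀, t₀)) (hn : n ≠ 0)
    (hderiv : deriv (fun t => f (y₀, t)) t₀ ≠ 0) :
    ∃ σ : E → 𝕜, ContDiffAt 𝕜 n σ y₀ ∧ ∀ᶠ y in 𝓝 y₀, f (y, σ y) = f (y₀, t₀) := by
  have hpartial : (fderiv 𝕜 f (y₀, t₀) ∘L .inr 𝕜 E 𝕜) 1 = deriv (fun t => f (y₀, t)) t₀ :=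
    (((hf.differentiableAt hn).hasFDerivAt.comp_hasDerivAt t₀
      ((hasDerivAt_const t₀ y₀).prodMk (hasDerivAt_id t₀))).deriv).symm
  have hinv := ContinuousLinearMap.isInvertible_of_isUnit_apply_one (hpartial ▸ hderiv).isUnit
  exact ⟨_, hf.contDiffAt_implicitFunction hn hinv, hf.eventually_apply_implicitFunction hn hinv⟩

end ScalarImplicitFunction

section Manifold

variable {E : Type*} [NormedAddCommGroup E] [NormedSpace ℝ E]
  {H : Type*} [TopologicalSpace H] {I : ModelWithCorners ℝ E H} [I.Boundaryless]
  {M : Type*} [TopologicalSpace M] [ChartedSpace H M] {n : WithTop ℕ∞} [IsManifold I n M]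
  {E' : Type*} [NormedAddCommGroup E'] [NormedSpace ℝ E']
  {F : Type*} [NormedAddCommGroup F] [NormedSpace ℝ F]

theorem ContMDiff.contDiffAt_comp_extChartAt_symm {G : E' × M → F}
    (hG : ContMDiff (𝓘(ℝ, E').prod I) 𝓘(ℝ, F) n G) (x₀ : M) (t : E') :
    ContDiffAt ℝ n (fun p : E × E' => G (p.2, (extChartAt I x₀).symm p.1))
      (extChartAt I x₀ x₀, t) := by
  have hchart : ContMDiffAt 𝓘(ℝ, E) I n (extChartAt I x₀).symm (extChartAt I x₀ x₀) :=
    (contMDiffOn_extChartAt_symm x₀).contMDiffAt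
      ((isOpen_extChartAt_target x₀).mem_nhds (mem_extChartAt_target x₀))
  have hcoord : ContMDiffAt 𝓘(ℝ, E × E') (𝓘(ℝ, E').prod I) n
      (fun p : E × E' => (p.2, (extChartAt I x₀).symm p.1)) (extChartAt I x₀ x₀, t) :=
    contDiffAt_snd.contMDiffAt.prodMk
      (hchart.comp (extChartAt I x₀ x₀, t) contDiffAt_fst.contMDiffAt)
  exact contMDiffAt_iff_contDiffAt.mp (hG.contMDiffAt.comp _ hcoord)

theorem ContMDiff.exists_contMDiffAt_eventually_apply_eq_of_deriv_ne_zero [CompleteSpace E]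
    {G : ℝ × M → ℝ} (hG : ContMDiff (𝓘(ℝ, ℝ).prod I) 𝓘(ℝ, ℝ) n G) (hn : n ≠ 0) {x₀ : M}
    {t₀ : ℝ} (hderiv : deriv (fun t => G (t, x₀)) t₀ ≠ 0) :
    ∃ σ : M → ℝ, ContMDiffAt I 𝓘(ℝ, ℝ) n σ x₀ ∧ ∀ᶠ x in 𝓝 x₀, G (σ x, x) = G (t₀, x₀) := by
  have hx₀ : (extChartAt I x₀).symm (extChartAt I x₀ x₀) = x₀ := extChartAt_to_inv x₀
  obtain ⟨σ, hσ, hσeq⟩ :=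
    (hG.contDiffAt_comp_extChartAt_symm x₀ t₀).exists_contDiffAt_eventually_apply_eq_of_deriv_ne_zero
      hn (by dsimp only; rwa [hx₀])
  refine ⟨σ ∘ extChartAt I x₀, hσ.contMDiffAt.comp x₀ (contMDiffAt_extChartAt (I := I)), ?_⟩
  filter_upwards [extChartAt_source_mem_nhds (I := I) x₀,
    (continuousAt_extChartAt (I := I) x₀).eventually hσeq] with x hx hxσ
  simpa only [Function.comp_apply, hx₀, (extChartAt I x₀).left_inv hx] using hxσ

end Manifold

theorem flattening_stmt3_general
    {E : Type*} [NormedAddCommGroup E] [NormedSpace ℝ E] [FiniteDimensional ℝ E]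
    {H : Type*} [TopologicalSpace H] (I : ModelWithCorners ℝ E H) [I.Boundaryless]
    {M : Type*} [TopologicalSpace M] [ChartedSpace H M]
    [IsManifold I (⊤ : ℕ∞) M]
    (Φ : ℝ × M → M) (hΦ : ContMDiff ((𝓘(ℝ, ℝ)).prod I) I (⊤ : ℕ∞) Φ)
    (h : M → ℝ) (hh : ContMDiff I 𝓘(ℝ, ℝ) (⊤ : ℕ∞) h)
    (hpos : ∀ (x : M) (t : ℝ), 0 < deriv (fun s => h (Φ (s, x))) t)
    (τ : M → ℝ) (hτ : ∀ x : M, h (Φ (τ x, x)) = 0) :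
    ContMDiff I 𝓘(ℝ, ℝ) (⊤ : ℕ∞) τ := by
  intro x₀
  obtain ⟨σ, hσ, hσeq⟩ := (hh.comp hΦ).exists_contMDiffAt_eventually_apply_eq_of_deriv_ne_zero
    (by simp) (hpos x₀ (τ x₀)).ne'
  refine hσ.congr_of_eventuallyEq ?_
  filter_upwards [hσeq] with x hx
  exact (strictMono_of_deriv_pos (hpos x)).injective ((hτ x).trans (hx.trans (hτ x₀)).symm)

/-- Key step in the proof of Lemma 2 (smoothness of the flattening map `h^⊥`):
if `Φ : ℝ × M → M` is smooth, `h : M → ℝ` is smooth, the derivative of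
`s ↦ h (Φ (s, x))` is strictly positive at every time `t` for every `x`, and
`τ : M → ℝ` satisfies `h (Φ (τ x, x)) = 0` for all `x`, then `τ` is smooth. -/
theorem flattening_stmt3
    {E : Type*} [NormedAddCommGroup E] [NormedSpace ℝ E] [FiniteDimensional ℝ E]
    {H : Type*} [TopologicalSpace H] (I : ModelWithCorners ℝ E H) [I.Boundaryless]
    {M : Type*} [TopologicalSpace M] [T2Space M] [ChartedSpace H M]
    [IsManifold I (⊤ : ℕ∞) M]
    (Φ : ℝ × M → M) (hΦ : ContMDiff ((𝓘(ℝ, ℝ)).prod I) I (⊤ : ℕ∞) Φ)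
    (h : M → ℝ) (hh : ContMDiff I 𝓘(ℝ, ℝ) (⊤ : ℕ∞) h)
    (hpos : ∀ (x : M) (t : ℝ), 0 < deriv (fun s => h (Φ (s, x))) t)
    (τ : M → ℝ) (hτ : ∀ x : M, h (Φ (τ x, x)) = 0) :
    ContMDiff I 𝓘(ℝ, ℝ) (⊤ : ℕ∞) τ :=
  flattening_stmt3_general I Φ hΦ h hh hpos τ hτ
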